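/- (Hopf–Lax subsolution of Hamilton–Jacobi) For a bounded Lipschitz function φ on a metric space, the Hopf–Lax semigroup Q_tφ(x) := inf_y ( φ(y) + d²(x,y)/(2t) ) defines, for each x, a Lipschitz map t ↦ Q_tφ(x) which satisfies ∂_t Q_tφ(x) + (1/2)(lip_a Q_tφ)²(x) ≤ 0 for a.e. t > 0, where lip_a is the asymptotic Lipschitz constant. -/
import Mathlib


open Filter Topology MeasureTheory Set Metric
open scoped ENNReal NNReal

open Classical in
/-- The Hopf–Lax semigroup `Q_tφ(x) = inf_y (φ(y) + d²(x,y)/(2t))` for `t > 0`, with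
`Q_0φ = φ`. -/
noncomputable def hopfLax {X : Type*} [MetricSpace X] (φ : X → ℝ) (t : ℝ) (x : X) : ℝ :=
  if t ≤ 0 then φ x else ⨅ y : X, (φ y + dist x y ^ 2 / (2 * t))

/-- The asymptotic Lipschitz constant `lip_a f (x) = inf_{r>0} Lip(f|_{B_r(x)})`. -/
noncomputable def asympLip {X : Type*} [MetricSpace X] (f : X → ℝ) (x : X) : ℝ≥0∞ :=
  ⨅ (r : ℝ) (_ : 0 < r),
    ⨆ (y : X) (_ : y ∈ Metric.ball x r) (z : X) (_ : z ∈ Metric.ball x r) (_ : y ≠ z),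
      ENNReal.ofReal (|f y - f z| / dist y z)

section HLAux

variable {X : Type*} [MetricSpace X] [Nonempty X]
variable {φ : X → ℝ} {L : ℝ≥0} {M : ℝ}

private lemma le_add_eps {a b : ℝ} (h : ∀ ε : ℝ, 0 < ε → a ≤ b + ε) : a ≤ b := by
  by_contra hc
  push_neg at hc
  linarith [h ((a - b) / 2) (by linarith)]

private lemma hl_eq {t : ℝ} (ht : 0 < t) (w : X) :
    hopfLax φ t w = ⨅ y : X, (φ y + dist w y ^ 2 / (2 * t)) := by
  simp [hopfLax, not_le.mpr ht]

private lemma hl_bdd (hbd : ∀ z, |φ z| ≤ M) {t : ℝ} (ht : 0 < t) (w : X) :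
    BddBelow (Set.range fun y : X => φ y + dist w y ^ 2 / (2 * t)) := by
  refine ⟨-M, ?_⟩
  rintro _ ⟨y, rfl⟩
  have h1 := (abs_le.1 (hbd y)).1
  have h2 : 0 ≤ dist w y ^ 2 / (2 * t) := by positivity
  dsimp only
  linarith

private lemma hl_le (hbd : ∀ z, |φ z| ≤ M) {t : ℝ} (ht : 0 < t) (w y : X) :
    hopfLax φ t w ≤ φ y + dist w y ^ 2 / (2 * t) := by
  rw [hl_eq ht]
  exact ciInf_le (hl_bdd hbd ht w) y

private lemma hl_le_self (hbd : ∀ z, |φ z| ≤ M) {t : ℝ} (ht : 0 < t) (w : X) :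
    hopfLax φ t w ≤ φ w := by
  simpa using hl_le hbd ht w w

private lemma hl_exists (hbd : ∀ z, |φ z| ≤ M) {t : ℝ} (ht : 0 < t) (w : X) {ε : ℝ}
    (hε : 0 < ε) :
    ∃ y, φ y + dist w y ^ 2 / (2 * t) ≤ hopfLax φ t w + ε := by
  have h : (⨅ y : X, (φ y + dist w y ^ 2 / (2 * t))) < hopfLax φ t w + ε := by
    rw [← hl_eq ht]; linarith
  obtain ⟨y, hy⟩ := exists_lt_of_ciInf_lt h
  exact ⟨y, hy.le⟩

private lemma dist_bound (hlip : LipschitzWith L φ) (hbd : ∀ z, |φ z| ≤ M) {t : ℝ}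
    (ht : 0 < t) (w y : X) {ε : ℝ} (hε : 0 < ε)
    (hy : φ y + dist w y ^ 2 / (2 * t) ≤ hopfLax φ t w + ε) :
    dist w y ^ 2 ≤ 4 * L ^ 2 * t ^ 2 + 4 * t * ε := by
  have h1 : hopfLax φ t w ≤ φ w := hl_le_self hbd ht w
  have h2 : φ w - φ y ≤ L * dist w y := by
    have h := hlip.dist_le_mul w y
    rw [Real.dist_eq] at h
    have := (abs_le.1 h).2
    linarith [le_abs_self (φ w - φ y)]
  have hq : dist w y ^ 2 / (2 * t) ≤ (L : ℝ) * dist w y + ε := by linarith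
  have h3 := (div_le_iff₀ (by positivity : (0:ℝ) < 2 * t)).1 hq
  nlinarith [sq_nonneg (dist w y - 2 * (L : ℝ) * t), dist_nonneg (x := w) (y := y)]

private lemma hl_ge (hlip : LipschitzWith L φ) (hbd : ∀ z, |φ z| ≤ M) {t : ℝ} (ht : 0 < t)
    (w : X) : φ w - L ^ 2 * t / 2 ≤ hopfLax φ t w := by
  rw [hl_eq ht]
  refine le_ciInf fun y => ?_
  have h2 : φ w - φ y ≤ L * dist w y := by
    have h := hlip.dist_le_mul w y
    rw [Real.dist_eq] at h
    linarith [le_abs_self (φ w - φ y), (abs_le.1 h).2]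
  have h3 : (L : ℝ) * dist w y - L ^ 2 * t / 2 ≤ dist w y ^ 2 / (2 * t) := by
    rw [le_div_iff₀ (by positivity : (0:ℝ) < 2 * t)]
    nlinarith [sq_nonneg (dist w y - (L : ℝ) * t)]
  linarith

private lemma hl_anti (hbd : ∀ z, |φ z| ≤ M) {t t' : ℝ} (h0 : 0 < t') (h1 : t' ≤ t) (w : X) :
    hopfLax φ t w ≤ hopfLax φ t' w := by
  have ht : 0 < t := h0.trans_le h1
  rw [hl_eq h0]
  refine le_ciInf fun y => (hl_le hbd ht w y).trans ?_
  have : dist w y ^ 2 / (2 * t) ≤ dist w y ^ 2 / (2 * t') := by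
    apply div_le_div_of_nonneg_left (by positivity) (by positivity)
    linarith
  linarith

private lemma time_local (hlip : LipschitzWith L φ) (hbd : ∀ z, |φ z| ≤ M) {t t' : ℝ}
    (h0 : 0 < t') (h1 : t' ≤ t) (h2 : t ≤ 2 * t') (w : X) :
    hopfLax φ t' w ≤ hopfLax φ t w + 4 * L ^ 2 * (t - t') := by
  have ht : 0 < t := h0.trans_le h1
  apply le_add_eps
  intro ε hε
  obtain ⟨y, hy⟩ := hl_exists hbd ht w (show (0:ℝ) < ε / 3 by linarith)
  have hd := dist_bound hlip hbd ht w y (show (0:ℝ) < ε / 3 by linarith) hy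
  have key : dist w y ^ 2 * (t - t') / (2 * t * t') ≤ 4 * L ^ 2 * (t - t') + 2 * ε / 3 := by
    rw [div_le_iff₀ (by positivity : (0:ℝ) < 2 * t * t')]
    have e3 : dist w y ^ 2 * (t - t') ≤ (4 * L ^ 2 * t ^ 2 + 4 * t * (ε / 3)) * (t - t') :=
      mul_le_mul_of_nonneg_right hd (by linarith)
    nlinarith [mul_nonneg (mul_nonneg (by positivity : (0:ℝ) ≤ 4 * (L:ℝ)^2 * t)
        (by linarith : (0:ℝ) ≤ t - t')) (by linarith : (0:ℝ) ≤ 2 * t' - t),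
      mul_nonneg (by positivity : (0:ℝ) ≤ (4/3) * ε * t) (by linarith : (0:ℝ) ≤ 2 * t' - t)]
  have hid : dist w y ^ 2 / (2 * t') =
      dist w y ^ 2 / (2 * t) + dist w y ^ 2 * (t - t') / (2 * t * t') := by
    field_simp
    ring
  have h4 := hl_le hbd h0 w y
  rw [hid] at h4
  linarith

private lemma time_glob (hlip : LipschitzWith L φ) (hbd : ∀ z, |φ z| ≤ M) {t t' : ℝ}
    (h0 : 0 < t') (h1 : t' ≤ t) (w : X) :
    hopfLax φ t' w ≤ hopfLax φ t w + 4 * L ^ 2 * (t - t') := by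
  have key : ∀ n : ℕ, ∀ s : ℝ, t' ≤ s → s ≤ 2 ^ n * t' →
      hopfLax φ t' w ≤ hopfLax φ s w + 4 * L ^ 2 * (s - t') := by
    intro n
    induction n with
    | zero =>
      intro s hs1 hs2
      have : s = t' := le_antisymm (by simpa using hs2) hs1
      subst this
      simp
    | succ n ih =>
      intro s hs1 hs2
      by_cases hc : s ≤ 2 * t'
      · exact time_local hlip hbd h0 hs1 hc w
      · push_neg at hc
        have h3 : t' ≤ s / 2 := by linarith
        have h4 : s / 2 ≤ 2 ^ n * t' := by
          rw [pow_succ] at hs2; linarith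
        have i1 := ih (s / 2) h3 h4
        have i2 := time_local hlip hbd (show (0:ℝ) < s / 2 by linarith)
          (show s / 2 ≤ s by linarith) (by linarith) w
        linarith
  obtain ⟨n, hn⟩ : ∃ n : ℕ, t ≤ 2 ^ n * t' := by
    obtain ⟨n, hn⟩ := pow_unbounded_of_one_lt (t / t') (one_lt_two (α := ℝ))
    exact ⟨n, by rw [div_lt_iff₀ h0] at hn; linarith⟩
  exact key n t h1 hn

private lemma time_abs (hlip : LipschitzWith L φ) (hbd : ∀ z, |φ z| ≤ M) (x : X)
    {t' t : ℝ} (h1 : t' ≤ t) :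
    |hopfLax φ t x - hopfLax φ t' x| ≤ 4 * L ^ 2 * (t - t') := by
  have hL2 : (0:ℝ) ≤ (L:ℝ) ^ 2 := by positivity
  have hRHS : (0:ℝ) ≤ 4 * (L:ℝ) ^ 2 * (t - t') := by
    apply mul_nonneg (by positivity)
    linarith
  by_cases ht : t ≤ 0
  · have h2 : t' ≤ 0 := h1.trans ht
    simp only [hopfLax, if_pos ht, if_pos h2, sub_self, abs_zero]
    exact hRHS
  · push_neg at ht
    by_cases ht' : t' ≤ 0
    · have e1 : hopfLax φ t' x = φ x := by simp [hopfLax, if_pos ht']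
      have e2 := hl_le_self hbd ht x
      have e3 := hl_ge hlip hbd ht x
      rw [e1, abs_le]
      constructor
      · nlinarith [mul_nonneg hL2 ht.le, mul_nonneg hL2 (neg_nonneg.2 ht')]
      · linarith
    · push_neg at ht'
      have e2 := hl_anti hbd ht' h1 x
      have e3 := time_glob hlip hbd ht' h1 x
      rw [abs_le]
      constructor <;> linarith

private lemma time_lip (hlip : LipschitzWith L φ) (hbd : ∀ z, |φ z| ≤ M) (x : X) :
    LipschitzWith (4 * L ^ 2) (fun t => hopfLax φ t x) := by
  apply LipschitzWith.of_dist_le_mul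
  intro a b
  rcases le_total a b with h | h
  · have h2 : |a - b| = b - a := by rw [abs_sub_comm]; exact abs_of_nonneg (by linarith)
    rw [Real.dist_eq, Real.dist_eq, h2, abs_sub_comm]
    have := time_abs hlip hbd x h
    push_cast
    linarith
  · have h2 : |a - b| = a - b := abs_of_nonneg (by linarith)
    rw [Real.dist_eq, Real.dist_eq, h2]
    have := time_abs hlip hbd x h
    push_cast
    linarith

private lemma sq_le_to_le {a b : ℝ} (ha : 0 ≤ a) (hb : 0 ≤ b) (h : a ^ 2 ≤ b ^ 2) : a ≤ b := by
  nlinarith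

private lemma minimizer_dist (hlip : LipschitzWith L φ) (hbd : ∀ z, |φ z| ≤ M) {t : ℝ}
    (ht : 0 < t) (w u : X) {ε : ℝ} (hε : 0 < ε) (hε1 : ε ≤ 1)
    (hu : φ u + dist w u ^ 2 / (2 * t) ≤ hopfLax φ t w + ε) :
    dist w u ≤ 2 * L * t + 2 * Real.sqrt t := by
  have hd2 := dist_bound hlip hbd ht w u hε hu
  have hs : Real.sqrt t ^ 2 = t := Real.sq_sqrt ht.le
  refine sq_le_to_le dist_nonneg (by positivity) ?_
  nlinarith [Real.sqrt_nonneg t, mul_nonneg (mul_nonneg (by positivity : (0:ℝ) ≤ 8 * (L:ℝ))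
    ht.le) (Real.sqrt_nonneg t)]

private lemma spatial (hlip : LipschitzWith L φ) (hbd : ∀ z, |φ z| ≤ M) {t : ℝ} (ht : 0 < t)
    (w w' : X) :
    hopfLax φ t w ≤ hopfLax φ t w' +
      (2 * (2 * L * t + 2 * Real.sqrt t) + dist w w') / (2 * t) * dist w w' := by
  set B : ℝ := 2 * L * t + 2 * Real.sqrt t with hB_def
  have hB : 0 ≤ B := by positivity
  apply le_add_eps
  intro ε hε
  have hε'0 : 0 < min ε 1 := lt_min hε one_pos
  obtain ⟨u, hu⟩ := hl_exists hbd ht w' hε'0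
  have hdu : dist w' u ≤ B := minimizer_dist hlip hbd ht w' u hε'0 (min_le_right _ _) hu
  have t1 : dist w u - dist w' u ≤ dist w w' := by
    have := dist_triangle w w' u
    linarith
  have t2 : dist w u + dist w' u ≤ 2 * B + dist w w' := by
    have := dist_triangle w w' u
    linarith
  have t3 : dist w u ^ 2 - dist w' u ^ 2 ≤ (2 * B + dist w w') * dist w w' := by
    have e : dist w u ^ 2 - dist w' u ^ 2 =
        (dist w u + dist w' u) * (dist w u - dist w' u) := by ring
    have p1 : (0:ℝ) ≤ dist w u + dist w' u := by positivity
    have m1 := mul_le_mul_of_nonneg_left t1 p1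
    have m2 := mul_le_mul_of_nonneg_right t2 (dist_nonneg (x := w) (y := w'))
    linarith
  have t4 : (dist w u ^ 2 - dist w' u ^ 2) / (2 * t) ≤
      (2 * B + dist w w') / (2 * t) * dist w w' := by
    rw [div_mul_eq_mul_div]
    exact div_le_div_of_nonneg_right t3 (by positivity) |>.trans_eq rfl
  have h5 := hl_le hbd ht w u
  have hid : dist w u ^ 2 / (2 * t) =
      dist w' u ^ 2 / (2 * t) + (dist w u ^ 2 - dist w' u ^ 2) / (2 * t) := by ring
  rw [hid] at h5
  have hmin : min ε 1 ≤ ε := min_le_left _ _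
  linarith

set_option maxHeartbeats 1000000 in
private lemma min_dist_claim (hlip : LipschitzWith L φ) (hbd : ∀ z, |φ z| ≤ M) (x : X)
    {t₀ D : ℝ} (ht₀ : 0 < t₀) (hD : HasDerivAt (fun s => hopfLax φ s x) D t₀)
    (hDneg : D ≤ 0) {η₂ : ℝ} (hη₂ : 0 < η₂) :
    ∃ r : ℝ, 0 < r ∧ r ≤ 1 ∧ ∃ ε₀ : ℝ, 0 < ε₀ ∧
      ∀ w : X, dist x w < r → ∀ u : X, ∀ ε : ℝ, 0 < ε → ε ≤ ε₀ →
        φ u + dist w u ^ 2 / (2 * t₀) ≤ hopfLax φ t₀ w + ε →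
        dist x u ^ 2 ≤ -(2 * t₀ ^ 2 * D) + η₂ := by
  set g := fun s => hopfLax φ s x with hg_def
  set η₁ := η₂ / (12 * t₀ ^ 2) with hη₁_def
  have hη₁ : 0 < η₁ := by positivity
  have e_eta : η₁ * (12 * t₀ ^ 2) = η₂ := by
    rw [hη₁_def]
    field_simp
  clear_value η₁
  have h1D : (0:ℝ) < 1 - D := by linarith
  set δ := min t₀ (η₂ / (6 * t₀ * (1 - D))) with hδ_def
  have hδ0 : 0 < δ := lt_min ht₀ (by positivity)
  have hslope : Tendsto (slope g t₀) (𝓝[>] t₀) (𝓝 D) :=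
    ((hasDerivAt_iff_tendsto_slope).1 hD).mono_left (nhdsWithin_mono _ fun y hy => hy.ne')
  have hev1 : ∀ᶠ s in 𝓝[>] t₀, D - η₁ < slope g t₀ s :=
    hslope.eventually (eventually_gt_nhds (by linarith))
  have hev2 : ∀ᶠ s in 𝓝[>] t₀, s ∈ Ioo t₀ (t₀ + δ) :=
    Ioo_mem_nhdsGT_of_mem ⟨le_refl t₀, by linarith⟩
  obtain ⟨t₁, hsl, ht₁l, ht₁u⟩ := (hev1.and hev2).exists
  have ht₁pos : 0 < t₁ := ht₀.trans ht₁l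
  have ht₁2 : t₁ ≤ 2 * t₀ := by
    have : δ ≤ t₀ := min_le_left _ _
    linarith
  have hh : 0 < t₁ - t₀ := by linarith [ht₁l]
  have hδ2 : t₁ - t₀ ≤ η₂ / (6 * t₀ * (1 - D)) := by
    have : δ ≤ η₂ / (6 * t₀ * (1 - D)) := min_le_right _ _
    linarith
  clear_value δ
  set B := 2 * (L:ℝ) * t₀ + 2 * Real.sqrt t₀ with hBdef
  have hB : 0 ≤ B := by positivity
  set R₁ := B + 1 with hR₁def
  set K := (2 * B + 2) / (2 * t₀) with hKdef
  have hK : 0 ≤ K := by positivity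
  set P := K + R₁ / t₀ with hPdef
  have hP : 0 ≤ P := by
    have h0 : (0:ℝ) ≤ R₁ / t₀ := by positivity
    exact add_nonneg hK h0
  refine ⟨min 1 ((t₁ - t₀) * η₂ / (24 * t₀ ^ 2 * (P + 1))), lt_min one_pos (by positivity),
    min_le_left _ _, min 1 ((t₁ - t₀) * η₂ / (24 * t₀ ^ 2)), lt_min one_pos (by positivity), ?_⟩
  intro w hw u ε hε hεε₀ hu
  set r := min 1 ((t₁ - t₀) * η₂ / (24 * t₀ ^ 2 * (P + 1))) with hrdef
  have hr0 : 0 < r := lt_min one_pos (by positivity)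
  have hr1 : r ≤ 1 := min_le_left _ _
  have hrb : r * (24 * t₀ ^ 2 * (P + 1)) ≤ (t₁ - t₀) * η₂ :=
    (le_div_iff₀ (by positivity)).1 (min_le_right _ _)
  clear_value r
  have hε1 : ε ≤ 1 := hεε₀.trans (min_le_left _ _)
  have hxw1 : dist x w ≤ 1 := by linarith [hw, hr1]
  -- Step 1 : distance of minimizer to w
  have hdwu : dist w u ≤ B := minimizer_dist hlip hbd ht₀ w u hε hε1 hu
  -- Step 2
  have hxu : dist x u ≤ R₁ := by
    have := dist_triangle x w u
    rw [hR₁def]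
    linarith
  -- Step 3 : approximate minimality at x
  have s1 : dist x u - dist w u ≤ dist x w := by
    have := dist_triangle x w u
    linarith
  have s3 : dist x u ^ 2 - dist w u ^ 2 ≤ 2 * R₁ * dist x w := by
    have e : dist x u ^ 2 - dist w u ^ 2 =
        (dist x u + dist w u) * (dist x u - dist w u) := by ring
    have p1 : (0:ℝ) ≤ dist x u + dist w u := by positivity
    have m1 := mul_le_mul_of_nonneg_left s1 p1
    have hsum : dist x u + dist w u ≤ 2 * R₁ := by
      rw [hR₁def] at hxu ⊢
      linarith
    have m2 := mul_le_mul_of_nonneg_right hsum (dist_nonneg (x := x) (y := w))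
    linarith
  have s4 : hopfLax φ t₀ w ≤ g t₀ + K * dist x w := by
    have h := spatial hlip hbd ht₀ w x
    rw [dist_comm w x, ← hBdef] at h
    have hcoef : (2 * B + dist x w) / (2 * t₀) * dist x w ≤ K * dist x w := by
      refine mul_le_mul_of_nonneg_right ?_ dist_nonneg
      rw [hKdef]
      exact div_le_div_of_nonneg_right (by linarith) (by positivity) |>.trans_eq rfl
    exact h.trans (by simp only [hg_def]; linarith)
  clear_value B R₁ K P
  have s5 : φ u + dist x u ^ 2 / (2 * t₀) ≤ g t₀ + (ε + r * P) := by
    have hid : dist x u ^ 2 / (2 * t₀) =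
        dist w u ^ 2 / (2 * t₀) + (dist x u ^ 2 - dist w u ^ 2) / (2 * t₀) := by ring
    have h6 : (dist x u ^ 2 - dist w u ^ 2) / (2 * t₀) ≤ R₁ / t₀ * dist x w := by
      calc (dist x u ^ 2 - dist w u ^ 2) / (2 * t₀)
          ≤ 2 * R₁ * dist x w / (2 * t₀) := div_le_div_of_nonneg_right s3 (by positivity)
        _ = R₁ / t₀ * dist x w := by ring
    have h7 : (K + R₁ / t₀) * dist x w ≤ P * r := by
      rw [← hPdef]
      exact mul_le_mul_of_nonneg_left hw.le hP
    rw [hid]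
    have h7' : K * dist x w + R₁ / t₀ * dist x w ≤ P * r := by
      calc K * dist x w + R₁ / t₀ * dist x w = (K + R₁ / t₀) * dist x w := by ring
        _ ≤ P * r := h7
    linarith [hu, s4]
  -- Step 4 : time transfer
  have hglet₁ : g t₁ ≤ φ u + dist x u ^ 2 / (2 * t₁) := hl_le hbd ht₁pos x u
  have hidt : dist x u ^ 2 / (2 * t₁) =
      dist x u ^ 2 / (2 * t₀) - dist x u ^ 2 * (t₁ - t₀) / (2 * t₀ * t₁) := by
    field_simp
    ring
  rw [hidt] at hglet₁
  have hslope2 : (D - η₁) * (t₁ - t₀) < g t₁ - g t₀ := by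
    have h := hsl
    rw [slope_def_field] at h
    exact (lt_div_iff₀ hh).1 h
  have h8 : dist x u ^ 2 * (t₁ - t₀) / (2 * t₀ * t₁) ≤ (η₁ - D) * (t₁ - t₀) + (ε + r * P) := by
    linarith only [hglet₁, s5, hslope2]
  have master : dist x u ^ 2 * (t₁ - t₀) ≤
      ((η₁ - D) * (t₁ - t₀) + (ε + r * P)) * (2 * t₀ * t₁) :=
    (div_le_iff₀ (by positivity : (0:ℝ) < 2 * t₀ * t₁)).1 h8
  -- numeric bounds
  have c1 : 2 * t₀ * t₁ * η₁ ≤ η₂ / 3 := by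
    have hint : (0:ℝ) ≤ 2 * t₀ * (2 * t₀ - t₁) * η₁ :=
      mul_nonneg (mul_nonneg (by positivity) (by linarith)) hη₁.le
    linarith only [hint, e_eta]
  have c2 : -D * (2 * t₀ * (t₁ - t₀)) ≤ η₂ / 3 := by
    have hh6 : (t₁ - t₀) * (6 * t₀ * (1 - D)) ≤ η₂ := (le_div_iff₀ (by positivity)).1 hδ2
    have hint : (0:ℝ) ≤ 6 * t₀ * (t₁ - t₀) := mul_nonneg (by positivity) (by linarith only [hh])
    linarith only [hh6, hint]
  have hεrP : (0:ℝ) ≤ ε + r * P := by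
    have := mul_nonneg hr0.le hP
    linarith
  have c3 : 4 * t₀ ^ 2 * (ε + r * P) ≤ η₂ / 3 * (t₁ - t₀) := by
    have hεb : ε * (24 * t₀ ^ 2) ≤ (t₁ - t₀) * η₂ :=
      (le_div_iff₀ (by positivity)).1 (hεε₀.trans (min_le_right _ _))
    have h9 : (0:ℝ) ≤ 24 * t₀ ^ 2 * r := by positivity
    linarith only [hεb, hrb, h9]
  have expand : ((η₁ - D) * (t₁ - t₀) + (ε + r * P)) * (2 * t₀ * t₁) =
      2 * t₀ * t₁ * η₁ * (t₁ - t₀) + -(2 * t₀ ^ 2 * D) * (t₁ - t₀)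
        + -D * (2 * t₀ * (t₁ - t₀)) * (t₁ - t₀) + 2 * t₀ * t₁ * (ε + r * P) := by
    ring
  have d1 : 2 * t₀ * t₁ * η₁ * (t₁ - t₀) ≤ η₂ / 3 * (t₁ - t₀) :=
    mul_le_mul_of_nonneg_right c1 hh.le
  have d2 : -D * (2 * t₀ * (t₁ - t₀)) * (t₁ - t₀) ≤ η₂ / 3 * (t₁ - t₀) :=
    mul_le_mul_of_nonneg_right c2 hh.le
  have d3 : 2 * t₀ * t₁ * (ε + r * P) ≤ η₂ / 3 * (t₁ - t₀) := by
    have h10 : 2 * t₀ * t₁ * (ε + r * P) ≤ 4 * t₀ ^ 2 * (ε + r * P) := by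
      refine mul_le_mul_of_nonneg_right ?_ hεrP
      have hint : (0:ℝ) ≤ 2 * t₀ * (2 * t₀ - t₁) :=
        mul_nonneg (by positivity) (by linarith only [ht₁2])
      linarith only [hint]
    linarith [c3]
  have final : dist x u ^ 2 * (t₁ - t₀) ≤ (-(2 * t₀ ^ 2 * D) + η₂) * (t₁ - t₀) := by
    rw [expand] at master
    linarith only [master, d1, d2, d3]
  exact le_of_mul_le_mul_right final hh

set_option maxHeartbeats 1000000 in
private lemma pointwise_HJ (hlip : LipschitzWith L φ) (hbd : ∀ z, |φ z| ≤ M) (x : X)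
    {t₀ D : ℝ} (ht₀ : 0 < t₀) (hD : HasDerivAt (fun s => hopfLax φ s x) D t₀) :
    (D : EReal) + (1/2 : EReal) *
      (((asympLip (fun z => hopfLax φ t₀ z) x) ^ 2 : ℝ≥0∞) : EReal) ≤ 0 := by
  have hDneg : D ≤ 0 := by
    have hslope : Tendsto (slope (fun s => hopfLax φ s x) t₀) (𝓝[>] t₀) (𝓝 D) :=
      ((hasDerivAt_iff_tendsto_slope).1 hD).mono_left (nhdsWithin_mono _ fun y hy => hy.ne')
    refine le_of_tendsto hslope ?_
    filter_upwards [self_mem_nhdsWithin] with s hs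
    rw [slope_def_field]
    apply div_nonpos_of_nonpos_of_nonneg
    · have := hl_anti hbd ht₀ (le_of_lt hs) x
      linarith
    · have : t₀ < s := hs
      linarith
  set A := -(2 * t₀ ^ 2 * D) with hA_def
  have hA : 0 ≤ A := by
    have h1 : (0:ℝ) ≤ t₀ ^ 2 * (-D) := mul_nonneg (sq_nonneg t₀) (by linarith)
    rw [hA_def]
    linarith
  have lipbound : asympLip (fun z => hopfLax φ t₀ z) x ≤ ENNReal.ofReal (Real.sqrt A / t₀) := by
    refine ENNReal.le_of_forall_pos_le_add fun η hη _ => ?_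
    have hηR : (0:ℝ) < η := hη
    have hη₂ : (0:ℝ) < ((η:ℝ) * t₀ / 2) ^ 2 := by positivity
    obtain ⟨r₀, hr₀0, hr₀1, ε₀, hε₀0, hcl⟩ := min_dist_claim hlip hbd x ht₀ hD hDneg hη₂
    set r := min r₀ ((η:ℝ) * t₀ / 2) with hrdef
    have hr0 : 0 < r := lt_min hr₀0 (by positivity)
    have hrt : r ≤ (η:ℝ) * t₀ / 2 := min_le_right _ _
    have key : ∀ y z : X, dist x y < r → dist x z < r →
        hopfLax φ t₀ y - hopfLax φ t₀ z ≤ (Real.sqrt A / t₀ + η) * dist y z := by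
      intro y z hy hz
      apply le_add_eps
      intro ε hε
      have hεm : 0 < min ε ε₀ := lt_min hε hε₀0
      obtain ⟨u, hu⟩ := hl_exists hbd ht₀ z hεm
      have hxu2 : dist x u ^ 2 ≤ A + ((η:ℝ) * t₀ / 2) ^ 2 :=
        hcl z (lt_of_lt_of_le hz (min_le_left _ _)) u (min ε ε₀) hεm (min_le_right _ _) hu
      have hxu : dist x u ≤ Real.sqrt A + (η:ℝ) * t₀ / 2 := by
        have h1 : dist x u ≤ Real.sqrt (A + ((η:ℝ) * t₀ / 2) ^ 2) := by
          rw [← Real.sqrt_sq (dist_nonneg (x := x) (y := u))]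
          exact Real.sqrt_le_sqrt hxu2
        refine h1.trans ?_
        rw [Real.sqrt_le_left (by positivity)]
        nlinarith [Real.sqrt_nonneg A, Real.sq_sqrt hA]
      have hQy := hl_le hbd ht₀ y u
      have hyu : dist y u ≤ dist x u + r := by
        have h := dist_triangle y x u
        have h2 : dist y x < r := by rw [dist_comm]; exact hy
        linarith
      have hzu : dist z u ≤ dist x u + r := by
        have h := dist_triangle z x u
        have h2 : dist z x < r := by rw [dist_comm]; exact hz
        linarith
      have hsub : dist y u - dist z u ≤ dist y z := by
        have := dist_triangle y z u
        linarith
      have hs3 : dist y u ^ 2 - dist z u ^ 2 ≤ 2 * (dist x u + r) * dist y z := by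
        have p1 : (0:ℝ) ≤ dist y u + dist z u := by positivity
        have m1 := mul_le_mul_of_nonneg_left hsub p1
        have m2 := mul_le_mul_of_nonneg_right
          (show dist y u + dist z u ≤ 2 * (dist x u + r) by linarith)
          (dist_nonneg (x := y) (y := z))
        have e : dist y u ^ 2 - dist z u ^ 2 =
            (dist y u + dist z u) * (dist y u - dist z u) := by ring
        linarith only [m1, m2, e]
      have hfrac : (dist y u ^ 2 - dist z u ^ 2) / (2 * t₀) ≤
          (dist x u + r) / t₀ * dist y z := by
        calc (dist y u ^ 2 - dist z u ^ 2) / (2 * t₀)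
            ≤ 2 * (dist x u + r) * dist y z / (2 * t₀) :=
              div_le_div_of_nonneg_right hs3 (by positivity)
          _ = (dist x u + r) / t₀ * dist y z := by ring
      have hcoef : (dist x u + r) / t₀ ≤ Real.sqrt A / t₀ + η := by
        have h1 : dist x u + r ≤ Real.sqrt A + (η:ℝ) * t₀ := by linarith
        calc (dist x u + r) / t₀ ≤ (Real.sqrt A + (η:ℝ) * t₀) / t₀ :=
              div_le_div_of_nonneg_right h1 ht₀.le
          _ = Real.sqrt A / t₀ + η := by field_simp
      have hfinal : (dist x u + r) / t₀ * dist y z ≤ (Real.sqrt A / t₀ + η) * dist y z :=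
        mul_le_mul_of_nonneg_right hcoef (dist_nonneg (x := y) (y := z))
      have hεmle : min ε ε₀ ≤ ε := min_le_left _ _
      have hid : dist y u ^ 2 / (2 * t₀) =
          dist z u ^ 2 / (2 * t₀) + (dist y u ^ 2 - dist z u ^ 2) / (2 * t₀) := by ring
      rw [hid] at hQy
      linarith only [hQy, hu, hfrac, hfinal, hεmle]
    calc asympLip (fun z => hopfLax φ t₀ z) x
        ≤ ⨆ (y : X) (_ : y ∈ Metric.ball x r) (z : X) (_ : z ∈ Metric.ball x r) (_ : y ≠ z),
            ENNReal.ofReal (|hopfLax φ t₀ y - hopfLax φ t₀ z| / dist y z) := by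
          rw [asympLip]
          exact le_trans (iInf_le _ r) (iInf_le _ hr0)
      _ ≤ ENNReal.ofReal (Real.sqrt A / t₀ + η) := by
          refine iSup_le fun y => iSup_le fun hy => iSup_le fun z => iSup_le fun hz =>
            iSup_le fun hyz => ENNReal.ofReal_le_ofReal ?_
          have hdyz : 0 < dist y z := dist_pos.2 hyz
          rw [div_le_iff₀ hdyz]
          refine abs_sub_le_iff.2 ⟨key y z (mem_ball'.1 hy) (mem_ball'.1 hz), ?_⟩
          have h := key z y (mem_ball'.1 hz) (mem_ball'.1 hy)
          rwa [dist_comm z y] at h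
      _ ≤ ENNReal.ofReal (Real.sqrt A / t₀) + ↑η := by
          refine le_trans ENNReal.ofReal_add_le ?_
          rw [ENNReal.ofReal_coe_nnreal]
  have sqb : (asympLip (fun z => hopfLax φ t₀ z) x) ^ 2 ≤ ENNReal.ofReal (-(2 * D)) := by
    have h1 : (asympLip (fun z => hopfLax φ t₀ z) x) ^ 2 ≤
        (ENNReal.ofReal (Real.sqrt A / t₀)) ^ 2 := by
      rw [pow_two, pow_two]
      exact mul_le_mul' lipbound lipbound
    refine h1.trans ?_
    rw [← ENNReal.ofReal_pow (by positivity)]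
    refine ENNReal.ofReal_le_ofReal ?_
    rw [div_pow, Real.sq_sqrt hA, hA_def]
    rw [le_iff_eq_or_lt]
    left
    field_simp
  set e := (asympLip (fun z => hopfLax φ t₀ z) x) ^ 2 with he_def
  have hetop : e ≠ ⊤ := ne_top_of_le_ne_top ENNReal.ofReal_lt_top.ne sqb
  have hρ : e.toReal ≤ -(2 * D) := ENNReal.toReal_le_of_le_ofReal (by linarith) sqb
  have hcoe : ((e : ℝ≥0∞) : EReal) = ((e.toReal : ℝ) : EReal) := by
    have h1 : ((e : ℝ≥0∞) : EReal) ≠ ⊤ := by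
      rw [Ne, EReal.coe_ennreal_eq_top_iff]
      exact hetop
    have h2 : ((e : ℝ≥0∞) : EReal) ≠ ⊥ :=
      (EReal.bot_lt_zero.trans_le (EReal.coe_ennreal_nonneg e)).ne'
    rw [← EReal.coe_toReal h1 h2, EReal.toReal_coe_ennreal]
  rw [hcoe]
  have h12 : (1/2 : EReal) = ((1/2 : ℝ) : EReal) := by norm_cast
  rw [h12, ← EReal.coe_mul, ← EReal.coe_add]
  rw [EReal.coe_nonpos]
  linarith [hρ]

end HLAux

/-- Hopf–Lax produces subsolutions of the Hamilton–Jacobi equation: for a bounded Lipschitz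
function `φ` on a metric space, `t ↦ Q_tφ(x)` is Lipschitz on `[0,∞)` and satisfies
`∂_t Q_tφ(x) + (1/2)(lip_a Q_tφ)²(x) ≤ 0` for a.e. `t > 0`. -/
theorem hopfLax_HJ_subsolution {X : Type*} [MetricSpace X] [Nonempty X]
    (φ : X → ℝ) (L : ℝ≥0) (hlip : LipschitzWith L φ) (M : ℝ) (hbd : ∀ x, |φ x| ≤ M)
    (x : X) :
    (∃ C : ℝ≥0, LipschitzOnWith C (fun t => hopfLax φ t x) (Ici (0:ℝ))) ∧
    ∀ᵐ t ∂(volume.restrict (Ioi (0:ℝ))), ∃ D : ℝ,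
      HasDerivAt (fun s => hopfLax φ s x) D t ∧
      (D : EReal) + (1/2 : EReal) * (((asympLip (fun z => hopfLax φ t z) x) ^ 2 : ℝ≥0∞) : EReal)
        ≤ 0 := by
  have hlw := time_lip hlip hbd x
  constructor
  · exact ⟨4 * L ^ 2, hlw.lipschitzOnWith⟩
  · have hae : ∀ᵐ t ∂(volume : Measure ℝ), DifferentiableAt ℝ (fun s => hopfLax φ s x) t :=
      hlw.ae_differentiableAt
    have h1 : ∀ᵐ t ∂(volume.restrict (Ioi (0:ℝ))),
        DifferentiableAt ℝ (fun s => hopfLax φ s x) t := ae_restrict_of_ae hae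
    have h2 : ∀ᵐ t ∂(volume.restrict (Ioi (0:ℝ))), t ∈ Ioi (0:ℝ) :=
      ae_restrict_mem measurableSet_Ioi
    filter_upwards [h1, h2] with t hdiff ht
    exact ⟨deriv (fun s => hopfLax φ s x) t, hdiff.hasDerivAt,
      pointwise_HJ hlip hbd x ht hdiff.hasDerivAt⟩
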